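/- Let L be a first-order language and let G be a group that is also an L-structure, and suppose there exists a left-invariant mean m on ℓ-RUC(G), i.e., a mean with m(h ↦ f(ah)) = m(f) for all a ∈ G and f ∈ ℓ-RUC(G). Then for every nonempty compact Hausdorff topological space X with a basis ℬ, writing ρ for the σ-topology generated by ℬ, and for every action · : G × X → X that is σ-continuous (for every U ∈ ρ, {(g,x) : g·x ∈ U} is a countable union of products of a definable subset of G with a member of ρ), there exists a G-invariant probability measure μ on 𝔄(X), the σ-algebra generated by ρ; G-invariance means μ({x ∈ X : g·x ∈ A}) = μ(A) for every g ∈ G and every A ∈ 𝔄(X). -/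

import Mathlib

/-! Pulling the mean back along an orbit map `g ↦ g · x₀` gives a normalized positive linear
functional on `C(X)`: σ-continuity of the action and compactness of `X` make `g ↦ f (g · x₀)`
ℓ-RUC for every continuous `f`. The Riesz–Markov–Kakutani theorem represents this functional by a
regular Borel probability measure. Since cozero sets are σ-open, σ-continuity also makes every
`x ↦ g · x` a homeomorphism, and left invariance of the mean says the functional is invariant under
composition with it; by uniqueness of the representing measure, the measure is `G`-invariant.
Its restriction to `𝔄(X)`, which consists of Borel sets, is the required measure. -/

open FirstOrder

/-- A function `f : G → ℝ` on a group `G` that is an `L`-structure is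
logically right uniformly continuous if for every `ε > 0` there is a countable
cover of `G` by definable sets `Θ n` (with parameters from `G`) such that whenever
`g₁, g₂` lie in the same `Θ n`, then `|f (g₁ * h) - f (g₂ * h)| < ε` for all `h`. -/
def LRUC {G : Type*} [Group G] (L : Language) [L.Structure G] (f : G → ℝ) : Prop :=
  ∀ ε : ℝ, 0 < ε → ∃ Θ : ℕ → Set G,
    (∀ n : ℕ, (Set.univ : Set G).Definable₁ L (Θ n)) ∧
    (⋃ n, Θ n) = Set.univ ∧
    ∀ n : ℕ, ∀ g₁ ∈ Θ n, ∀ g₂ ∈ Θ n, ∀ h : G, |f (g₁ * h) - f (g₂ * h)| < ε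

/-- `ℓ-RUC(G)`: the bounded logically right uniformly continuous functions. -/
def lRUCSet (G : Type*) [Group G] (L : Language) [L.Structure G] : Set (G → ℝ) :=
  {f : G → ℝ | LRUC L f ∧ ∃ M : ℝ, ∀ x : G, |f x| ≤ M}

/-- A mean on `ℓ-RUC(G)`: linear on `ℓ-RUC(G)` and between the inf and the sup. -/
def IsMean {G : Type*} [Group G] (L : Language) [L.Structure G]
    (F : (G → ℝ) → ℝ) : Prop :=
  (∀ f g : G → ℝ, f ∈ lRUCSet G L → g ∈ lRUCSet G L → F (f + g) = F f + F g) ∧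
  (∀ (c : ℝ) (f : G → ℝ), f ∈ lRUCSet G L → F (c • f) = c * F f) ∧
  ∀ f : G → ℝ, f ∈ lRUCSet G L → (⨅ x : G, f x) ≤ F f ∧ F f ≤ ⨆ x : G, f x

/-- The σ-topology generated by a family `B` of subsets of `X`. -/
inductive SigmaGen {X : Type*} (B : Set (Set X)) : Set X → Prop
  | basic : ∀ s ∈ B, SigmaGen B s
  | empty : SigmaGen B ∅
  | univ : SigmaGen B Set.univ
  | inter : ∀ s t : Set X, SigmaGen B s → SigmaGen B t → SigmaGen B (s ∩ t)
  | iUnion : ∀ f : ℕ → Set X, (∀ n, SigmaGen B (f n)) → SigmaGen B (⋃ n, f n)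

open MeasureTheory

open Set TopologicalSpace

namespace SigmaGen

variable {X : Type*} {B : Set (Set X)}

theorem iUnion_of_countable {ι : Sort*} [Countable ι] {s : ι → Set X}
    (hs : ∀ i, SigmaGen B (s i)) : SigmaGen B (⋃ i, s i) := by
  rcases isEmpty_or_nonempty ι with _ | _
  · simpa using SigmaGen.empty (B := B)
  · obtain ⟨e, he⟩ := exists_surjective_nat ι
    rw [← he.iUnion_comp]
    exact iUnion _ fun n => hs (e n)

variable [TopologicalSpace X]

theorem isOpen (hB : IsTopologicalBasis B) {s : Set X} (hs : SigmaGen B s) : IsOpen s := by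
  induction hs with
  | basic s hs => exact hB.isOpen hs
  | empty => exact isOpen_empty
  | univ => exact isOpen_univ
  | inter _ _ _ _ hs ht => exact hs.inter ht
  | iUnion _ _ hs => exact isOpen_iUnion hs

theorem of_isOpen_of_isSigmaCompact (hB : IsTopologicalBasis B) {U : Set X} (hU : IsOpen U)
    (hσ : IsSigmaCompact U) : SigmaGen B U := by
  obtain ⟨K, hK, rfl⟩ := hσ
  have hcover (n : ℕ) : K n ⊆ ⋃ b : {b : Set X // b ∈ B ∧ b ⊆ ⋃ n, K n}, b.1 := fun x hx =>
    let ⟨b, hbB, hxb, hbU⟩ := hB.exists_subset_of_mem_open (mem_iUnion_of_mem n hx) hU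
    mem_iUnion.2 ⟨⟨b, hbB, hbU⟩, hxb⟩
  choose t ht using fun n => (hK n).elim_finite_subcover _ (fun b => hB.isOpen b.2.1) (hcover n)
  have hU : ⋃ n, K n = ⋃ p : (n : ℕ) × t n, p.2.1.1 := by
    refine Subset.antisymm (iUnion_subset fun n x hx => ?_) (iUnion_subset fun p => p.2.1.2.2)
    obtain ⟨b, hb, hxb⟩ := mem_iUnion₂.1 (ht n hx)
    exact mem_iUnion.2 ⟨⟨n, b, hb⟩, hxb⟩
  rw [hU]
  exact iUnion_of_countable fun p => basic _ p.2.1.2.1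

theorem preimage_of_continuous [CompactSpace X] (hB : IsTopologicalBasis B) {Y : Type*}
    [PseudoEMetricSpace Y] {f : X → Y} (hf : Continuous f) {O : Set Y} (hO : IsOpen O) :
    SigmaGen B (f ⁻¹' O) := by
  refine of_isOpen_of_isSigmaCompact hB (hO.preimage hf) ?_
  obtain ⟨F, hF, -, rfl, -⟩ := hO.exists_iUnion_isClosed
  rw [preimage_iUnion]
  exact isSigmaCompact_iUnion_of_isCompact _ fun n => ((hF n).preimage hf).isCompact

end SigmaGen

def IsSigmaContinuousAction {G X : Type*} (L : Language) [L.Structure G] (B : Set (Set X))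
    (act : G → X → X) : Prop :=
  ∀ U : Set X, SigmaGen B U →
    ∃ (Φ : ℕ → Set G) (V : ℕ → Set X),
      (∀ i : ℕ, (Set.univ : Set G).Definable₁ L (Φ i)) ∧
      (∀ i : ℕ, SigmaGen B (V i)) ∧
      {p : G × X | act p.1 p.2 ∈ U} = ⋃ i : ℕ, Φ i ×ˢ V i

namespace IsSigmaContinuousAction

variable {G X : Type*} {L : Language} [L.Structure G] {B : Set (Set X)} {act : G → X → X}

theorem preimage (hact : IsSigmaContinuousAction L B act) (g : G) {U : Set X}
    (hU : SigmaGen B U) : SigmaGen B (act g ⁻¹' U) := by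
  obtain ⟨Φ, V, -, hV, hUV⟩ := hact U hU
  have hU : act g ⁻¹' U = ⋃ i : {i // g ∈ Φ i}, V i := by
    ext x
    simpa using Set.ext_iff.1 hUV (g, x)
  rw [hU]
  exact SigmaGen.iUnion_of_countable fun i => hV i

theorem measurable (hact : IsSigmaContinuousAction L B act) (g : G) :
    Measurable[MeasurableSpace.generateFrom {s | SigmaGen B s},
      MeasurableSpace.generateFrom {s | SigmaGen B s}] (act g) :=
  @measurable_generateFrom _ _ (MeasurableSpace.generateFrom _) _ _ fun _ hU =>
    MeasurableSpace.measurableSet_generateFrom (hact.preimage g hU)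

variable [TopologicalSpace X] [CompactSpace X] [T2Space X]

/-- The cozero sets of a compact Hausdorff space form a basis, and their preimages lie in the
σ-topology. -/
theorem continuous (hact : IsSigmaContinuousAction L B act) (hB : IsTopologicalBasis B) (g : G) :
    Continuous (act g) := by
  refine continuous_def.2 fun V hV => isOpen_iff_forall_mem_open.2 fun x hx => ?_
  obtain ⟨f, hf1, -, hfV, -⟩ := exists_continuousMap_one_of_isCompact_subset_isOpen
    isCompact_singleton hV (singleton_subset_iff.2 hx)
  have hcozero := SigmaGen.preimage_of_continuous hB f.continuous (isOpen_compl_singleton (x := 0))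
  refine ⟨act g ⁻¹' (f ⁻¹' {0}ᶜ), preimage_mono fun y hy => hfV (subset_tsupport _ hy),
    (hact.preimage g hcozero).isOpen hB, ?_⟩
  simp [hf1 rfl]

def toHomeomorph [Group G] (hact : IsSigmaContinuousAction L B act) (hB : IsTopologicalBasis B)
    (hone : ∀ x : X, act 1 x = x) (hmul : ∀ (g h : G) (x : X), act (g * h) x = act g (act h x))
    (g : G) : X ≃ₜ X where
  toFun := act g
  invFun := act g⁻¹
  left_inv x := by rw [← hmul, inv_mul_cancel, hone]
  right_inv x := by rw [← hmul, mul_inv_cancel, hone]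
  continuous_toFun := hact.continuous hB g
  continuous_invFun := hact.continuous hB g⁻¹

end IsSigmaContinuousAction

theorem Set.definable₁_biInter_finset {M : Type*} {L : Language} [L.Structure M] {A : Set M}
    {ι : Type*} {f : ι → Set M} (hf : ∀ i, A.Definable₁ L (f i)) (s : Finset ι) :
    A.Definable₁ L (⋂ i ∈ s, f i) := by
  have hs : {x : Fin 1 → M | x 0 ∈ ⋂ i ∈ s, f i} = ⋂ i ∈ s, {x : Fin 1 → M | x 0 ∈ f i} := by
    ext; simp
  unfold Definable₁
  rw [hs]
  exact definable_biInter_finset hf s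

section Mean

variable {G : Type*} [Group G] {L : Language} [L.Structure G] {m : (G → ℝ) → ℝ}

theorem LRUC.of_countable_cover {f : G → ℝ}
    (h : ∀ ε > 0, ∃ 𝒯 : Set (Set G), 𝒯.Countable ∧ (∀ Θ ∈ 𝒯, (univ : Set G).Definable₁ L Θ) ∧
      ⋃₀ 𝒯 = univ ∧ ∀ Θ ∈ 𝒯, ∀ g₁ ∈ Θ, ∀ g₂ ∈ Θ, ∀ h, |f (g₁ * h) - f (g₂ * h)| < ε) :
    LRUC L f := by
  intro ε hε
  obtain ⟨𝒯, h𝒯, hdef, hcover, hosc⟩ := h ε hε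
  have hne : 𝒯.Nonempty := by
    obtain ⟨Θ, hΘ, -⟩ := mem_sUnion.1 (hcover ▸ mem_univ (1 : G))
    exact ⟨Θ, hΘ⟩
  obtain ⟨Θ, rfl⟩ := h𝒯.exists_eq_range hne
  exact ⟨Θ, fun n => hdef _ (mem_range_self n), by rwa [← sUnion_range],
    fun n => hosc _ (mem_range_self n)⟩

theorem IsMean.nonneg (hm : IsMean L m) {f : G → ℝ} (hf : f ∈ lRUCSet G L) (h0 : 0 ≤ f) : 0 ≤ m f :=
  (le_ciInf h0).trans (hm.2.2 f hf).1

theorem IsMean.apply_const (hm : IsMean L m) {c : ℝ} (hc : (fun _ : G => c) ∈ lRUCSet G L) :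
    m (fun _ => c) = c := by
  have hc := hm.2.2 _ hc
  rw [ciInf_const, ciSup_const] at hc
  exact le_antisymm hc.2 hc.1

end Mean

section Orbit

variable {G X : Type*} [Group G] {L : Language} [L.Structure G] [TopologicalSpace X]
  [CompactSpace X] {B : Set (Set X)} {act : G → X → X}

theorem IsSigmaContinuousAction.lruc_comp_orbit (hact : IsSigmaContinuousAction L B act)
    (hB : IsTopologicalBasis B) (hmul : ∀ (g h : G) (x : X), act (g * h) x = act g (act h x))
    {f : X → ℝ} (hf : Continuous f) (x₀ : X) : LRUC L (fun g => f (act g x₀)) := by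
  refine LRUC.of_countable_cover fun ε hε => ?_
  choose Φ V hΦ hV hΦV using fun q : ℚ =>
    hact _ (SigmaGen.preimage_of_continuous hB hf (isOpen_Ioo (a := (q : ℝ)) (b := q + ε)))
  have hmem (q : ℚ) (g : G) (x : X) :
      f (act g x) ∈ Ioo (q : ℝ) (q + ε) ↔ ∃ i, g ∈ Φ q i ∧ x ∈ V q i := by
    simpa using Set.ext_iff.1 (hΦV q) (g, x)
  -- `Θ` ranges over the intersections of the `G`-sides of finite families of rectangles whose
  -- `X`-sides cover `X`.
  let 𝒞 : Set (Finset (ℚ × ℕ)) := {s | univ ⊆ ⋃ j ∈ s, V j.1 j.2}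
  refine ⟨(fun s => ⋂ j ∈ s, Φ j.1 j.2) '' 𝒞, (to_countable 𝒞).image _, ?_, ?_, ?_⟩
  · rintro _ ⟨s, -, rfl⟩
    exact definable₁_biInter_finset (fun j => hΦ j.1 j.2) s
  · refine eq_univ_of_forall fun g => ?_
    have hcover : univ ⊆ ⋃ j : {j : ℚ × ℕ // g ∈ Φ j.1 j.2}, V j.1.1 j.1.2 := fun x _ => by
      obtain ⟨q, hq, hq'⟩ := exists_rat_btwn (sub_lt_self (f (act g x)) hε)
      obtain ⟨i, hgi, hxi⟩ := (hmem q g x).1 ⟨hq', by linarith⟩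
      exact mem_iUnion.2 ⟨⟨(q, i), hgi⟩, hxi⟩
    obtain ⟨t, ht⟩ := isCompact_univ.elim_finite_subcover _ (fun j => (hV _ _).isOpen hB) hcover
    refine mem_sUnion.2 ⟨_, ⟨t.map (Function.Embedding.subtype _), fun x hx => ?_, rfl⟩, ?_⟩
    · obtain ⟨j, hj, hxj⟩ := mem_iUnion₂.1 (ht hx)
      exact mem_iUnion₂.2 ⟨j.1, Finset.mem_map_of_mem _ hj, hxj⟩
    · simp only [Finset.mem_map, Function.Embedding.coe_subtype, mem_iInter]
      rintro _ ⟨j, -, rfl⟩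
      exact j.2
  · rintro _ ⟨s, hs, rfl⟩ g₁ hg₁ g₂ hg₂ h
    obtain ⟨j, hj, hx⟩ := mem_iUnion₂.1 (hs (mem_univ (act h x₀)))
    have h₁ := (hmem j.1 g₁ _).2 ⟨j.2, mem_iInter₂.1 hg₁ j hj, hx⟩
    have h₂ := (hmem j.1 g₂ _).2 ⟨j.2, mem_iInter₂.1 hg₂ j hj, hx⟩
    rw [hmul, hmul, abs_sub_lt_iff]
    constructor <;> linarith [h₁.1, h₁.2, h₂.1, h₂.2]

theorem IsSigmaContinuousAction.comp_orbit_mem_lRUCSet (hact : IsSigmaContinuousAction L B act)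
    (hB : IsTopologicalBasis B) (hmul : ∀ (g h : G) (x : X), act (g * h) x = act g (act h x))
    {f : X → ℝ} (hf : Continuous f) (x₀ : X) : (fun g => f (act g x₀)) ∈ lRUCSet G L := by
  obtain ⟨M, hM⟩ := isCompact_univ.exists_bound_of_continuousOn hf.continuousOn
  exact ⟨hact.lruc_comp_orbit hB hmul hf x₀, M, fun g => hM _ (mem_univ _)⟩

end Orbit

namespace RealRMK

open CompactlySupported

variable {X : Type*} [TopologicalSpace X] [T2Space X] [LocallyCompactSpace X] [MeasurableSpace X]
  [BorelSpace X] (Λ : C_c(X, ℝ) →ₚ[ℝ] ℝ)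

theorem map_rieszMeasure_of_comp_eq (e : X ≃ₜ X)
    (h : ∀ f : C_c(X, ℝ), Λ (f.comp e.toCocompactMap) = Λ f) :
    (rieszMeasure Λ).map e = rieszMeasure Λ := by
  have := Measure.Regular.map (μ := rieszMeasure Λ) e
  refine Measure.ext_of_integral_eq_on_compactlySupported fun f => ?_
  rw [← e.toMeasurableEquiv_coe, integral_map_equiv, integral_rieszMeasure, ← h f,
    ← integral_rieszMeasure]
  rfl

theorem rieszMeasure_preimage (e : X ≃ₜ X)
    (h : ∀ f : C_c(X, ℝ), Λ (f.comp e.toCocompactMap) = Λ f) (A : Set X) :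
    rieszMeasure Λ (e ⁻¹' A) = rieszMeasure Λ A := by
  calc rieszMeasure Λ (e ⁻¹' A) = (rieszMeasure Λ).map e.toMeasurableEquiv A :=
        (e.toMeasurableEquiv.map_apply A).symm
    _ = rieszMeasure Λ A := by rw [e.toMeasurableEquiv_coe, map_rieszMeasure_of_comp_eq Λ e h]

theorem rieszMeasure_univ [CompactSpace X] :
    rieszMeasure Λ univ =
      ENNReal.ofReal (Λ (CompactlySupportedContinuousMap.continuousMapEquiv 1)) :=
  le_antisymm (rieszMeasure_le_of_eq_one Λ (fun _ => zero_le_one) isCompact_univ fun _ _ => rfl)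
    (le_rieszMeasure_tsupport_subset Λ (fun _ => ⟨zero_le_one, le_rfl⟩) (subset_univ _))

end RealRMK

section OrbitMean

open CompactlySupported CompactlySupportedContinuousMap

variable {G X : Type*} [Group G] {L : Language} [L.Structure G] [TopologicalSpace X]
  [CompactSpace X] {B : Set (Set X)} {act : G → X → X} {m : (G → ℝ) → ℝ}

noncomputable def orbitMeanFunctional (hm : IsMean L m) (hact : IsSigmaContinuousAction L B act)
    (hB : IsTopologicalBasis B) (hmul : ∀ (g h : G) (x : X), act (g * h) x = act g (act h x))
    (x₀ : X) : C_c(X, ℝ) →ₚ[ℝ] ℝ :=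
  PositiveLinearMap.mk₀
    { toFun f := m fun g => f (act g x₀)
      map_add' f₁ f₂ := hm.1 _ _ (hact.comp_orbit_mem_lRUCSet hB hmul f₁.continuous x₀)
        (hact.comp_orbit_mem_lRUCSet hB hmul f₂.continuous x₀)
      map_smul' c f := hm.2.1 c _ (hact.comp_orbit_mem_lRUCSet hB hmul f.continuous x₀) }
    fun f hf => hm.nonneg (hact.comp_orbit_mem_lRUCSet hB hmul f.continuous x₀) fun _ => hf _

variable (hm : IsMean L m) (hact : IsSigmaContinuousAction L B act) (hB : IsTopologicalBasis B)
  (hmul : ∀ (g h : G) (x : X), act (g * h) x = act g (act h x))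

theorem orbitMeanFunctional_one (x₀ : X) :
    orbitMeanFunctional hm hact hB hmul x₀ (continuousMapEquiv 1) = 1 :=
  hm.apply_const (hact.comp_orbit_mem_lRUCSet hB hmul continuous_const x₀)

theorem orbitMeanFunctional_comp_act [T2Space X]
    (hinv : ∀ a : G, ∀ f ∈ lRUCSet G L, m (fun h => f (a * h)) = m f)
    (hone : ∀ x : X, act 1 x = x) (x₀ : X) (g : G) (f : C_c(X, ℝ)) :
    orbitMeanFunctional hm hact hB hmul x₀
        (f.comp (hact.toHomeomorph hB hone hmul g).toCocompactMap) =
      orbitMeanFunctional hm hact hB hmul x₀ f := by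
  show (m fun h => f (act g (act h x₀))) = m fun h => f (act h x₀)
  simp_rw [← hmul]
  exact hinv g _ (hact.comp_orbit_mem_lRUCSet hB hmul f.continuous x₀)

end OrbitMean

/-- If there is a left-invariant mean on `ℓ-RUC(G)`, then every σ-continuous action of
`G` on a nonempty compact Hausdorff space `X` admits a `G`-invariant probability measure
on the σ-algebra generated by the σ-topology generated by a basis of `X`. -/
theorem invariant_measure_of_invariant_mean {G : Type*} [Group G] (L : Language)
    [L.Structure G]
    (m : (G → ℝ) → ℝ) (hm : IsMean L m)
    (hinv : ∀ a : G, ∀ f ∈ lRUCSet G L, m (fun h => f (a * h)) = m f)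
    {X : Type*} [TopologicalSpace X] [CompactSpace X] [T2Space X] [Nonempty X]
    (B : Set (Set X)) (hB : TopologicalSpace.IsTopologicalBasis B)
    (act : G → X → X)
    (hone : ∀ x : X, act 1 x = x)
    (hmul : ∀ (g h : G) (x : X), act (g * h) x = act g (act h x))
    (hcont : ∀ U : Set X, SigmaGen B U →
      ∃ (Φ : ℕ → Set G) (V : ℕ → Set X),
        (∀ i : ℕ, (Set.univ : Set G).Definable₁ L (Φ i)) ∧
        (∀ i : ℕ, SigmaGen B (V i)) ∧
        {p : G × X | act p.1 p.2 ∈ U} = ⋃ i : ℕ, Φ i ×ˢ V i) :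
    ∃ μ : @MeasureTheory.Measure X (MeasurableSpace.generateFrom {s : Set X | SigmaGen B s}),
      μ Set.univ = 1 ∧
      ∀ g : G, ∀ A : Set X,
        MeasurableSet[MeasurableSpace.generateFrom {s : Set X | SigmaGen B s}] A →
        μ ((fun x => act g x) ⁻¹' A) = μ A := by
  obtain ⟨x₀⟩ := ‹Nonempty X›
  have hact : IsSigmaContinuousAction L B act := hcont
  borelize X
  let Λ := orbitMeanFunctional hm hact hB hmul x₀
  have hle : MeasurableSpace.generateFrom {s | SigmaGen B s} ≤ borel X :=
    MeasurableSpace.generateFrom_le fun s hs => (SigmaGen.isOpen hB hs).measurableSet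
  refine ⟨(RealRMK.rieszMeasure Λ).trim hle, ?_, fun g A hA => ?_⟩
  · rw [trim_measurableSet_eq hle MeasurableSet.univ, RealRMK.rieszMeasure_univ,
      orbitMeanFunctional_one, ENNReal.ofReal_one]
  · rw [trim_measurableSet_eq hle hA, trim_measurableSet_eq hle (hact.measurable g hA)]
    exact RealRMK.rieszMeasure_preimage Λ (hact.toHomeomorph hB hone hmul g)
      (orbitMeanFunctional_comp_act hm hact hB hmul hinv hone x₀ g) A
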